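/- (Hypothesis Correctness.) The probability that the Label procedure returns a correct hypothesis set increases monotonically with the number of unlabelled examples: fix a finite nonempty type α of atoms, an initial state (T₀, P₀) with T₀ covering P₀ and P₀ nonempty, a probability measure μ on α, and a set 𝒞 of 'correct' hypotheses (a set of subsets of α). For n ∈ ℕ, let p(n) be the probability, over a sequence of n unlabelled examples drawn independently according to μ, that the hypothesis set T obtained by running the Label procedure on that sequence satisfies T ⊆ 𝒞 (every returned hypothesis is correct). Then p is monotone nondecreasing: for all n, p(n) ≤ p(n + 1); moreover the returned hypothesis set T is always nonempty. -/

import Mathlib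

/-!
A Label step only ever removes hypotheses from `T`, so if the first `n` draws already leave
`T ⊆ 𝒞`, so do the first `n + 1`; the extra coordinate has total mass one and does not change
the probability. Coverage of `P` by `T` is preserved by each step (an example is labelled
positive only if discarding the hypotheses that accept it would break coverage, so some do)
and `P` only grows, so `T` covers a nonempty set and is nonempty.
-/

/-- `T` covers `P` if every example in `P` is accepted by some hypothesis in `T`. -/
def Covers {α : Type*} (T : Set (Set α)) (P : Set α) : Prop :=
  ∀ p ∈ P, ∃ H ∈ T, p ∈ H

open Classical in
/-- The Label step on state `(T, P)` with unlabelled example `e`: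
let `T' = {H ∈ T | e ∉ H}`; if `T'` covers `P` then the new state is `(T', P)`
(`e` labelled negative); otherwise the new state is `(T, insert e P)`
(`e` labelled positive). -/
noncomputable def LabelStep {α : Type*} (s : Set (Set α) × Set α) (e : α) :
    Set (Set α) × Set α :=
  if Covers {H ∈ s.1 | e ∉ H} s.2 then ({H ∈ s.1 | e ∉ H}, s.2)
  else (s.1, insert e s.2)

/-- The Label procedure: left fold of the Label step over a list of examples. -/
noncomputable def LabelRun {α : Type*} (s : Set (Set α) × Set α) (l : List α) :
    Set (Set α) × Set α :=
  l.foldl LabelStep s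

section Label

variable {α : Type*}

lemma labelStep_fst_subset (s : Set (Set α) × Set α) (e : α) : (LabelStep s e).1 ⊆ s.1 := by
  unfold LabelStep
  split_ifs
  · exact Set.sep_subset _ _
  · exact subset_rfl

lemma labelStep_snd_superset (s : Set (Set α) × Set α) (e : α) : s.2 ⊆ (LabelStep s e).2 := by
  unfold LabelStep
  split_ifs
  · exact subset_rfl
  · exact Set.subset_insert _ _

lemma Covers.nonempty {T : Set (Set α)} {P : Set α} (h : Covers T P) (hP : P.Nonempty) :
    T.Nonempty :=
  let ⟨_, hq⟩ := hP
  let ⟨H, hH, _⟩ := h _ hq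
  ⟨H, hH⟩

lemma Covers.labelStep {s : Set (Set α) × Set α} (h : Covers s.1 s.2) (e : α) :
    Covers (LabelStep s e).1 (LabelStep s e).2 := by
  unfold LabelStep
  split_ifs with hc
  · exact hc
  · rintro q (rfl | hq)
    · -- if no hypothesis accepted `q`, filtering it out would change nothing and still cover
      by_contra! hnot
      exact hc fun r hr ↦
        let ⟨H, hH, hrH⟩ := h r hr
        ⟨H, ⟨hH, hnot H hH⟩, hrH⟩
    · exact h q hq

lemma labelRun_append (s : Set (Set α) × Set α) (l l' : List α) :
    LabelRun s (l ++ l') = LabelRun (LabelRun s l) l' :=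
  List.foldl_append

lemma labelRun_fst_subset (s : Set (Set α) × Set α) (l : List α) : (LabelRun s l).1 ⊆ s.1 := by
  induction l generalizing s with
  | nil => exact subset_rfl
  | cons e l ih => exact (ih _).trans (labelStep_fst_subset s e)

lemma labelRun_snd_superset (s : Set (Set α) × Set α) (l : List α) : s.2 ⊆ (LabelRun s l).2 := by
  induction l generalizing s with
  | nil => exact subset_rfl
  | cons e l ih => exact (labelStep_snd_superset s e).trans (ih _)

lemma Covers.labelRun {s : Set (Set α) × Set α} (h : Covers s.1 s.2) (l : List α) :
    Covers (LabelRun s l).1 (LabelRun s l).2 := by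
  induction l generalizing s with
  | nil => exact h
  | cons e l ih => exact ih (h.labelStep e)

lemma labelRun_append_fst_subset (s : Set (Set α) × Set α) (l l' : List α) :
    (LabelRun s (l ++ l')).1 ⊆ (LabelRun s l).1 := by
  rw [labelRun_append]
  exact labelRun_fst_subset _ l'

end Label

namespace MeasureTheory

lemma measure_pi_preimage_init {α : Type*} [MeasurableSpace α] (μ : Measure α)
    [IsProbabilityMeasure μ] {n : ℕ} (S : Set (Fin n → α)) :
    Measure.pi (fun _ : Fin (n + 1) ↦ μ) (Fin.init ⁻¹' S) = Measure.pi (fun _ ↦ μ) S := by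
  have hinit : Fin.init ⁻¹' S =
      MeasurableEquiv.piFinSuccAbove (fun _ ↦ α) (Fin.last n) ⁻¹' (Set.univ ×ˢ S) := by
    ext x
    simp
  rw [hinit, (measurePreserving_piFinSuccAbove (fun _ ↦ μ) (Fin.last n)).measure_preimage_equiv,
    Measure.prod_prod, measure_univ, one_mul]

lemma measure_pi_ofFn_le_succ {α : Type*} [MeasurableSpace α] (μ : Measure α)
    [IsProbabilityMeasure μ] {Q : List α → Prop} (hQ : ∀ l a, Q l → Q (l ++ [a])) (n : ℕ) :
    Measure.pi (fun _ : Fin n ↦ μ) {x | Q (List.ofFn x)} ≤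
      Measure.pi (fun _ : Fin (n + 1) ↦ μ) {x | Q (List.ofFn x)} := by
  rw [← measure_pi_preimage_init]
  refine measure_mono fun x hx ↦ ?_
  have hsnoc : List.ofFn x = List.ofFn (Fin.init x) ++ [x (Fin.last n)] := by
    rw [List.ofFn_succ', List.concat_eq_append]
    rfl
  simpa only [Set.mem_ofPred_eq, hsnoc] using hQ _ _ hx

end MeasureTheory

open MeasureTheory in
theorem stmt_8_general {α : Type*}
    [MeasurableSpace α]
    (T₀ : Set (Set α)) (P₀ : Set α) (hTP : Covers T₀ P₀) (hP₀ : P₀.Nonempty)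
    (μ : Measure α) [IsProbabilityMeasure μ]
    (𝒞 : Set (Set α))
    (p : ℕ → ENNReal)
    (hp : ∀ n, p n = (Measure.pi fun _ : Fin n => μ)
      {x : Fin n → α | (LabelRun (T₀, P₀) (List.ofFn x)).1 ⊆ 𝒞}) :
    (∀ n, p n ≤ p (n + 1)) ∧
      ∀ l : List α, (LabelRun (T₀, P₀) l).1.Nonempty := by
  refine ⟨fun n ↦ ?_, fun l ↦ (hTP.labelRun l).nonempty (hP₀.mono (labelRun_snd_superset _ l))⟩
  rw [hp n, hp (n + 1)]
  exact measure_pi_ofFn_le_succ μ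
    (fun l a hl ↦ (labelRun_append_fst_subset _ l [a]).trans hl) n

open MeasureTheory in
/-- Hypothesis Correctness: the probability that the Label procedure returns a
correct hypothesis set (one contained in the set `𝒞` of correct hypotheses),
over `n` unlabelled examples drawn i.i.d. from `μ`, is monotone nondecreasing
in `n`; moreover the returned hypothesis set is always nonempty. -/
theorem stmt_8 {α : Type*} [Fintype α] [Nonempty α]
    [MeasurableSpace α] [MeasurableSingletonClass α]
    (T₀ : Set (Set α)) (P₀ : Set α) (hTP : Covers T₀ P₀) (hP₀ : P₀.Nonempty)
    (μ : Measure α) [IsProbabilityMeasure μ]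
    (𝒞 : Set (Set α))
    (p : ℕ → ENNReal)
    (hp : ∀ n, p n = (Measure.pi fun _ : Fin n => μ)
      {x : Fin n → α | (LabelRun (T₀, P₀) (List.ofFn x)).1 ⊆ 𝒞}) :
    (∀ n, p n ≤ p (n + 1)) ∧
      ∀ l : List α, (LabelRun (T₀, P₀) l).1.Nonempty :=
  stmt_8_general T₀ P₀ hTP hP₀ μ 𝒞 p hp
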